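/- Let $\bm a=(a_1,\dots,a_n)$ with $0<a_1\le\dots\le a_n$ be a local maximizer of $\bm a\mapsto c_k(E(\bm a))/(a_1\cdots a_n)^{1/n}$, where $c_k(E(\bm a))$ is the $k$-th smallest positive integer multiple (with multiplicity) of the $a_j$. Then every $a_i$ divides $c_k(E(\bm a))$: there exist positive integers $r_1\ge\dots\ge r_n$ with $c_k(E(\bm a))=r_1a_1=\dots=r_na_n$; moreover $r_1+\dots+r_n=k+n-1$. -/
import Mathlib


/-- `ckE a k` : the `k`-th smallest element (with multiplicity) of the multiset of all
positive integer multiples of the entries of `a`. -/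
noncomputable def ckE {n : ℕ} (a : Fin n → ℝ) (k : ℕ) : ℝ :=
  sInf {c : ℝ | k ≤ {p : ℕ × Fin n | 1 ≤ p.1 ∧ (p.1 : ℝ) * a p.2 ≤ c}.ncard}

noncomputable def Nf {n : ℕ} (b : Fin n → ℝ) (c : ℝ) : ℕ := ∑ i, ⌊c / b i⌋₊

lemma ncard_eq {n : ℕ} (b : Fin n → ℝ) (hb : ∀ i, 0 < b i) (c : ℝ) :
    {p : ℕ × Fin n | 1 ≤ p.1 ∧ (p.1 : ℝ) * b p.2 ≤ c}.ncard = Nf b c := by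
  have hmem : ∀ (m : ℕ) (i : Fin n), (1 ≤ m ∧ (m : ℝ) * b i ≤ c) ↔ (1 ≤ m ∧ m ≤ ⌊c / b i⌋₊) := by
    intro m i
    constructor
    · rintro ⟨h1, h2⟩
      exact ⟨h1, Nat.le_floor ((le_div_iff₀ (hb i)).2 h2)⟩
    · rintro ⟨h1, h2⟩
      refine ⟨h1, ?_⟩
      have h0 : (0:ℝ) ≤ c / b i := by
        by_contra h
        rw [Nat.floor_of_nonpos (le_of_not_ge (fun h' => h (lt_irrefl _ (lt_of_lt_of_le (lt_of_not_ge h) h') |>.elim)))] at h2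
        · omega
      have : (m : ℝ) ≤ c / b i := le_trans (by exact_mod_cast Nat.cast_le.2 h2) (Nat.floor_le h0)
      exact (le_div_iff₀ (hb i)).1 this
  have hset : {p : ℕ × Fin n | 1 ≤ p.1 ∧ (p.1 : ℝ) * b p.2 ≤ c}
      = ↑(Finset.univ.biUnion (fun i : Fin n =>
          (Finset.Icc 1 ⌊c / b i⌋₊).image (fun m => (m, i)))) := by
    ext ⟨m, i⟩
    simp only [Set.mem_setOf_eq, Finset.coe_biUnion, Set.mem_iUnion, Finset.mem_coe,
      Finset.mem_image, Finset.mem_Icc, Finset.mem_univ, Prod.mk.injEq, exists_true_left]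
    rw [hmem m i]
    constructor
    · rintro ⟨h1, h2⟩
      exact ⟨i, m, ⟨h1, h2⟩, rfl, rfl⟩
    · rintro ⟨j, m', ⟨h1, h2⟩, rfl, rfl⟩
      exact ⟨h1, h2⟩
  rw [hset, Set.ncard_coe_finset, Finset.card_biUnion]
  · refine Finset.sum_congr rfl fun i _ => ?_
    rw [Finset.card_image_of_injective _ (fun m m' h => (Prod.mk.injEq _ _ _ _ ▸ h : _ ∧ _).1)]
    simp [Nat.card_Icc]
  · intro i _ j _ hij
    simp only [Finset.disjoint_left, Finset.mem_image]
    rintro ⟨m, l⟩ ⟨m1, _, h1⟩ ⟨m2, _, h2⟩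
    apply hij
    have e1 := congrArg Prod.snd h1
    have e2 := congrArg Prod.snd h2
    simp only at e1 e2
    rw [e1, e2]

lemma ckE_eq {n : ℕ} (b : Fin n → ℝ) (hb : ∀ i, 0 < b i) (k : ℕ) :
    ckE b k = sInf {c : ℝ | k ≤ Nf b c} := by
  unfold ckE
  congr 1
  ext c
  simp only [Set.mem_setOf_eq]
  rw [ncard_eq b hb c]

lemma floor_le_of_lt_add_one {x : ℝ} {m : ℕ} (h : x < (m : ℝ) + 1) : ⌊x⌋₊ ≤ m := by
  rcases le_or_gt 0 x with h0 | h0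
  · exact Nat.lt_succ_iff.mp ((Nat.floor_lt h0).2 (by push_cast; linarith))
  · simp [Nat.floor_of_nonpos h0.le]

lemma Nf_mono {n : ℕ} {b : Fin n → ℝ} (hb : ∀ i, 0 < b i) {c c' : ℝ} (h : c ≤ c') :
    Nf b c ≤ Nf b c' := by
  apply Finset.sum_le_sum
  intro i _
  exact Nat.floor_le_floor (by gcongr ; exact (hb i).le)

lemma Sk_nonempty {n k : ℕ} (b : Fin n → ℝ) (hb : ∀ i, 0 < b i) (hn : 0 < n) :
    ((k : ℝ) * b ⟨0, hn⟩) ∈ {c : ℝ | k ≤ Nf b c} := by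
  have : k = ⌊((k:ℝ) * b ⟨0, hn⟩) / b ⟨0, hn⟩⌋₊ := by
    rw [mul_div_assoc, div_self (hb _).ne', mul_one, Nat.floor_natCast]
  calc k = ⌊((k:ℝ) * b ⟨0, hn⟩) / b ⟨0, hn⟩⌋₊ := this
  _ ≤ Nf b _ := Finset.single_le_sum (f := fun i => ⌊((k:ℝ) * b ⟨0, hn⟩) / b i⌋₊)
      (fun i _ => Nat.zero_le _) (Finset.mem_univ _)

lemma Sk_lb {n k : ℕ} (b : Fin n → ℝ) (hb : ∀ i, 0 < b i) (hk : 1 ≤ k) :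
    ∀ c ∈ {c : ℝ | k ≤ Nf b c}, (0:ℝ) ≤ c := by
  intro c hc
  by_contra h
  push_neg at h
  have : Nf b c = 0 := by
    apply Finset.sum_eq_zero
    intro i _
    exact Nat.floor_of_nonpos (div_nonpos_of_nonpos_of_nonneg h.le (hb i).le)
  simp only [Set.mem_setOf_eq, this] at hc
  omega

lemma sInf_mem_Sk {n k : ℕ} (b : Fin n → ℝ) (hb : ∀ i, 0 < b i) (hn : 0 < n) (hk : 1 ≤ k) :
    k ≤ Nf b (sInf {c : ℝ | k ≤ Nf b c}) := by
  set c0 := sInf {c : ℝ | k ≤ Nf b c} with hc0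
  have hne : Set.Nonempty {c : ℝ | k ≤ Nf b c} := ⟨_, Sk_nonempty b hb hn⟩
  have hbdd : BddBelow {c : ℝ | k ≤ Nf b c} := ⟨0, Sk_lb b hb hk⟩
  have hc0nn : (0:ℝ) ≤ c0 := le_csInf hne (Sk_lb b hb hk)
  by_contra hlt
  push_neg at hlt
  set ε : ℝ := Finset.univ.inf' (Finset.univ_nonempty_iff.2 ⟨⟨0, hn⟩⟩)
    (fun i => b i * (⌊c0 / b i⌋₊ + 1) - c0) with hε
  have hεpos : 0 < ε := by
    rw [hε]
    apply Finset.lt_inf'_iff _ |>.2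
    intro i _
    have h1 : c0 / b i < ⌊c0 / b i⌋₊ + 1 := Nat.lt_floor_add_one _
    have := (div_lt_iff₀ (hb i)).1 h1
    nlinarith [hb i]
  obtain ⟨c', hc', hlt'⟩ := exists_lt_of_csInf_lt hne (by linarith : c0 < c0 + ε)
  have hge : c0 ≤ c' := csInf_le hbdd hc'
  have : Nf b c' ≤ Nf b c0 := by
    apply Finset.sum_le_sum
    intro i _
    apply floor_le_of_lt_add_one
    have hεi : ε ≤ b i * (⌊c0 / b i⌋₊ + 1) - c0 :=
      Finset.inf'_le _ (Finset.mem_univ i)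
    have : c' < b i * (⌊c0 / b i⌋₊ + 1) := by linarith
    rw [div_lt_iff₀ (hb i)]
    linarith
  have := hc'.trans this
  omega

lemma Nf_lt_of_lt_sInf {n k : ℕ} (b : Fin n → ℝ) (hb : ∀ i, 0 < b i) (hk : 1 ≤ k)
    {c' : ℝ} (h : c' < sInf {c : ℝ | k ≤ Nf b c}) : Nf b c' < k := by
  by_contra hge
  push_neg at hge
  exact absurd (csInf_le ⟨0, Sk_lb b hb hk⟩ hge) (not_le.2 h)

lemma ckE_pos {n k : ℕ} (a : Fin n → ℝ) (ha : ∀ i, 0 < a i) (hn : 0 < n) (hk : 1 ≤ k) :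
    0 < ckE a k := by
  rw [ckE_eq a ha]
  have h := sInf_mem_Sk a ha hn hk
  by_contra hle
  push_neg at hle
  have : Nf a (sInf {c : ℝ | k ≤ Nf a c}) = 0 :=
    Finset.sum_eq_zero fun i _ =>
      Nat.floor_of_nonpos (div_nonpos_of_nonpos_of_nonneg hle (ha i).le)
  omega

lemma ckE_eq_same {n k : ℕ} (a b : Fin n → ℝ) (ha : ∀ i, 0 < a i) (hb : ∀ i, 0 < b i)
    (hn : 0 < n) (hk : 1 ≤ k) (hba : ∀ i, b i ≤ a i)
    (hlow : ∀ c' < ckE a k, Nf b c' < k) : ckE b k = ckE a k := by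
  have hcA : ckE a k = sInf {c : ℝ | k ≤ Nf a c} := ckE_eq a ha k
  apply le_antisymm
  · rw [ckE_eq b hb]
    apply csInf_le ⟨0, Sk_lb b hb hk⟩
    have h1 : k ≤ Nf a (ckE a k) := by rw [hcA]; exact sInf_mem_Sk a ha hn hk
    have h0 : (0:ℝ) ≤ ckE a k := (ckE_pos a ha hn hk).le
    have h2 : Nf a (ckE a k) ≤ Nf b (ckE a k) := by
      apply Finset.sum_le_sum
      intro i _
      exact Nat.floor_le_floor (by gcongr; exacts [(hb i), hba i])
    exact Set.mem_setOf_eq ▸ le_trans h1 h2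
  · rw [ckE_eq b hb]
    apply le_csInf ⟨_, Sk_nonempty b hb hn⟩
    intro x hx
    by_contra hlt
    push_neg at hlt
    exact absurd hx (not_le.2 (hlow x hlt))

lemma no_perturb {n k : ℕ} (hn : 0 < n) (hk : 1 ≤ k) (a : Fin n → ℝ) (hapos : ∀ i, 0 < a i)
    (hmax : IsLocalMaxOn (fun b : Fin n → ℝ => ckE b k / (∏ i, b i) ^ ((1:ℝ)/(n:ℝ)))
      {b | ∀ i, 0 < b i} a) (i : Fin n)
    (h : ∃ δ0, 0 < δ0 ∧ ∀ δ, 0 < δ → δ < δ0 → ckE (Function.update a i (a i - δ)) k = ckE a k) :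
    False := by
  obtain ⟨δ0, hδ0, hP⟩ := h
  have hc_pos : 0 < ckE a k := ckE_pos a hapos hn hk
  obtain ⟨ε, hε, hsub⟩ := Metric.mem_nhdsWithin_iff.1 hmax
  set δ := min (min δ0 ε) (a i) / 2 with hδ
  have hδpos : 0 < δ := by
    have := hapos i
    simp only [hδ]
    positivity
  have hδ1 : δ < δ0 := by
    have h1 : min (min δ0 ε) (a i) ≤ δ0 := le_trans (min_le_left _ _) (min_le_left _ _)
    simp only [hδ]; linarith
  have hδ2 : δ < ε := by
    have h1 : min (min δ0 ε) (a i) ≤ ε := le_trans (min_le_left _ _) (min_le_right _ _)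
    simp only [hδ]; linarith
  have hδ3 : δ < a i := by
    have h1 : min (min δ0 ε) (a i) ≤ a i := min_le_right _ _
    have := hapos i
    simp only [hδ]; linarith
  set b := Function.update a i (a i - δ) with hbdef
  have hbpos : ∀ j, 0 < b j := by
    intro j
    rcases eq_or_ne j i with rfl | hji
    · simp only [hbdef, Function.update_self]; linarith
    · simp only [hbdef, Function.update_of_ne hji]; exact hapos j
  have hball : b ∈ Metric.ball a ε := by
    rw [Metric.mem_ball, dist_pi_lt_iff hε]
    intro j
    rcases eq_or_ne j i with rfl | hji
    · simp only [hbdef, Function.update_self, Real.dist_eq]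
      rw [abs_of_nonpos (by linarith)]
      linarith
    · simp only [hbdef, Function.update_of_ne hji, dist_self]; exact hε
  have hfb := hsub (Set.mem_inter hball hbpos)
  simp only [Set.mem_setOf_eq] at hfb
  have hprodpos : (0:ℝ) < ∏ j, b j := Finset.prod_pos fun j _ => hbpos j
  have hprodposa : (0:ℝ) < ∏ j, a j := Finset.prod_pos fun j _ => hapos j
  have hprod : ∏ j, b j < ∏ j, a j := by
    have hperase : (0:ℝ) < ∏ j ∈ Finset.univ.erase i, a j :=
      Finset.prod_pos fun j _ => hapos j
    rw [hbdef, Finset.prod_update_of_mem (Finset.mem_univ i),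
      Finset.sdiff_singleton_eq_erase,
      ← Finset.mul_prod_erase Finset.univ a (Finset.mem_univ i)]
    nlinarith
  have hpow : (0:ℝ) < (1:ℝ)/(n:ℝ) := by positivity
  have h2 : (∏ j, b j) ^ ((1:ℝ)/(n:ℝ)) < (∏ j, a j) ^ ((1:ℝ)/(n:ℝ)) :=
    Real.rpow_lt_rpow hprodpos.le hprod hpow
  have h3 : (0:ℝ) < (∏ j, b j) ^ ((1:ℝ)/(n:ℝ)) := Real.rpow_pos_of_pos hprodpos _
  have h4 : ckE a k / (∏ j, a j) ^ ((1:ℝ)/(n:ℝ)) < ckE a k / (∏ j, b j) ^ ((1:ℝ)/(n:ℝ)) :=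
    div_lt_div_of_pos_left hc_pos h3 h2
  rw [hP δ hδpos hδ1] at hfb
  linarith

/-- If an ordered positive tuple `a` is a local maximizer (on the positive orthant) of the
`k`-th ellipsoid capacity ratio, then every `aᵢ` divides `c_k(E(a))`: there are positive
integers `r₁ ≥ … ≥ rₙ` with `c_k(E(a)) = rᵢ aᵢ` for all `i`, and `r₁ + … + rₙ = k + n - 1`. -/
theorem stmt3 (n k : ℕ) (hn : 1 ≤ n) (hk : 1 ≤ k)
    (a : Fin n → ℝ) (hapos : ∀ i, 0 < a i) (hamono : Monotone a)
    (hmax : IsLocalMaxOn (fun b : Fin n → ℝ => ckE b k / (∏ i, b i) ^ ((1:ℝ)/(n:ℝ)))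
      {b | ∀ i, 0 < b i} a) :
    ∃ r : Fin n → ℕ, (∀ i, 1 ≤ r i) ∧ (∀ i j : Fin n, i ≤ j → r j ≤ r i) ∧
      (∀ i, (r i : ℝ) * a i = ckE a k) ∧ (∑ i, r i) = k + n - 1 := by
  have hn0 : 0 < n := hn
  set c := ckE a k with hcdef
  have hcsinf : c = sInf {x : ℝ | k ≤ Nf a x} := ckE_eq a hapos k
  have hcS : k ≤ Nf a c := by rw [hcsinf]; exact sInf_mem_Sk a hapos hn0 hk
  have hclt : ∀ c' < c, Nf a c' < k := by
    intro c' h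
    exact Nf_lt_of_lt_sInf a hapos hk (hcsinf ▸ h)
  have hcpos : 0 < c := ckE_pos a hapos hn0 hk
  -- Step 1: divisibility
  have hdiv : ∀ i, ∃ r : ℕ, (r : ℝ) * a i = c := by
    intro i
    by_contra hnd
    push_neg at hnd
    set ri := ⌊c / a i⌋₊ with hri
    have h1 : (ri:ℝ) * a i ≤ c := by
      rw [← le_div_iff₀ (hapos i)]
      exact Nat.floor_le (div_nonneg hcpos.le (hapos i).le)
    have h1' : (ri:ℝ) * a i < c := lt_of_le_of_ne h1 (hnd ri)
    have h2 : c < ((ri:ℝ)+1) * a i := by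
      rw [← div_lt_iff₀ (hapos i)]
      exact Nat.lt_floor_add_one _
    apply no_perturb hn0 hk a hapos hmax i
    have hpos' : 0 < a i - c / ((ri:ℝ)+1) := by
      rw [sub_pos, div_lt_iff₀ (by positivity : (0:ℝ) < (ri:ℝ)+1)]
      linarith
    refine ⟨a i - c / ((ri:ℝ)+1), hpos', ?_⟩
    intro δ hδ0 hδlt
    have hδai : δ < a i := lt_of_lt_of_le hδlt (by
      have : 0 < c / ((ri:ℝ)+1) := by positivity
      linarith)
    set b := Function.update a i (a i - δ) with hbdef
    have hbpos : ∀ j, 0 < b j := by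
      intro j
      rcases eq_or_ne j i with rfl | hji
      · simp only [hbdef, Function.update_self]; linarith
      · simp only [hbdef, Function.update_of_ne hji]; exact hapos j
    have hble : ∀ j, b j ≤ a j := by
      intro j
      rcases eq_or_ne j i with rfl | hji
      · simp only [hbdef, Function.update_self]; linarith
      · simp only [hbdef, Function.update_of_ne hji]; exact le_rfl
    apply ckE_eq_same a b hapos hbpos hn0 hk hble
    intro c' hc'
    rw [← hcdef] at hc'
    set c'' := max c' ((ri:ℝ) * a i) with hc''def
    have hc''lt : c'' < c := max_lt hc' h1'
    refine lt_of_le_of_lt ?_ (hclt c'' hc''lt)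
    apply Finset.sum_le_sum
    intro j _
    rcases eq_or_ne j i with rfl | hji
    · have hkey : ((ri:ℝ)+1) * (a j - δ) ≥ c := by
        have hge : a j - δ ≥ c / ((ri:ℝ)+1) := by linarith [hδlt.le]
        calc ((ri:ℝ)+1) * (a j - δ) ≥ ((ri:ℝ)+1) * (c / ((ri:ℝ)+1)) :=
              mul_le_mul_of_nonneg_left hge (by positivity)
          _ = c := mul_div_cancel₀ _ (by positivity)
      have hbj : b j = a j - δ := by simp [hbdef]
      rw [hbj]
      have hfl : ⌊c' / (a j - δ)⌋₊ ≤ ri := by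
        apply floor_le_of_lt_add_one
        rw [div_lt_iff₀ (by linarith : (0:ℝ) < a j - δ)]
        linarith
      refine le_trans hfl (Nat.le_floor ?_)
      rw [le_div_iff₀ (hapos j)]
      exact le_max_right _ _
    · have hbj : b j = a j := by simp [hbdef, Function.update_of_ne hji]
      rw [hbj]
      have hle' : c' ≤ c'' := le_max_left _ _
      exact Nat.floor_le_floor (by gcongr; exact (hapos j).le)
  choose r hr using hdiv
  have hr1 : ∀ i, 1 ≤ r i := by
    intro i
    by_contra h
    push_neg at h
    have h0 := hr i
    have hz : r i = 0 := by omega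
    rw [hz] at h0
    simp at h0
    linarith
  have hmono : ∀ i j : Fin n, i ≤ j → r j ≤ r i := by
    intro i j hij
    have hij' : a i ≤ a j := hamono hij
    have h1 : (r j : ℝ) * a i ≤ (r j : ℝ) * a j := by
      apply mul_le_mul_of_nonneg_left hij' (by positivity)
    rw [hr j, ← hr i] at h1
    have := le_of_mul_le_mul_right h1 (hapos i)
    exact_mod_cast this
  have hsum_aux : ∑ j, (r j - 1) + n = ∑ j, r j := by
    have heq : ∀ j ∈ Finset.univ, r j = (r j - 1) + 1 :=
      fun j _ => (Nat.succ_pred_eq_of_pos (hr1 j)).symm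
    rw [Finset.sum_congr rfl heq, Finset.sum_add_distrib]
    simp
  have hub : ∑ i, r i ≤ k + n - 1 := by
    have hune : (Finset.univ : Finset (Fin n)).Nonempty :=
      Finset.univ_nonempty_iff.2 ⟨⟨0, hn0⟩⟩
    set c' := Finset.univ.sup' hune (fun j => ((r j : ℝ) - 1) * a j) with hc'
    have hc'lt : c' < c := by
      rw [hc', Finset.sup'_lt_iff]
      intro j _
      nlinarith [hr j, hapos j]
    have hle : ∑ j, (r j - 1) ≤ Nf a c' := by
      apply Finset.sum_le_sum
      intro j _
      apply Nat.le_floor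
      rw [le_div_iff₀ (hapos j)]
      have hcast : ((r j - 1 : ℕ) : ℝ) = (r j : ℝ) - 1 := by
        have := hr1 j
        push_cast [Nat.cast_sub this]
        ring
      rw [hcast]
      exact Finset.le_sup' (fun j => ((r j : ℝ) - 1) * a j) (Finset.mem_univ j)
    have := hclt c' hc'lt
    omega
  have hlb : k + n - 1 ≤ ∑ i, r i := by
    by_contra hltt
    push_neg at hltt
    set i0 : Fin n := ⟨0, hn0⟩ with hi0
    apply no_perturb hn0 hk a hapos hmax i0
    have hgt : c < ((r i0 : ℝ) + 1) * a i0 := by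
      nlinarith [hapos i0, hr i0]
    have hpos' : 0 < a i0 - c / ((r i0 : ℝ) + 1) := by
      rw [sub_pos, div_lt_iff₀ (by positivity : (0:ℝ) < (r i0:ℝ)+1)]
      linarith
    refine ⟨a i0 - c / ((r i0:ℝ)+1), hpos', ?_⟩
    intro δ hδ0 hδlt
    have hδai : δ < a i0 := lt_of_lt_of_le hδlt (by
      have : 0 < c / ((r i0:ℝ)+1) := by positivity
      linarith)
    set b := Function.update a i0 (a i0 - δ) with hbdef
    have hbpos : ∀ j, 0 < b j := by
      intro j
      rcases eq_or_ne j i0 with rfl | hji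
      · simp only [hbdef, Function.update_self]; linarith
      · simp only [hbdef, Function.update_of_ne hji]; exact hapos j
    have hble : ∀ j, b j ≤ a j := by
      intro j
      rcases eq_or_ne j i0 with rfl | hji
      · simp only [hbdef, Function.update_self]; linarith
      · simp only [hbdef, Function.update_of_ne hji]; exact le_rfl
    apply ckE_eq_same a b hapos hbpos hn0 hk hble
    intro c' hc'
    rw [← hcdef] at hc'
    have hbound : ∀ j : Fin n, ⌊c' / b j⌋₊ ≤ if j = i0 then r i0 else r j - 1 := by
      intro j
      rcases eq_or_ne j i0 with rfl | hji
      · rw [if_pos rfl]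
        have hbj : b i0 = a i0 - δ := by simp [hbdef]
        rw [hbj]
        apply floor_le_of_lt_add_one
        rw [div_lt_iff₀ (by linarith : (0:ℝ) < a i0 - δ)]
        have hkey : ((r i0:ℝ)+1) * (a i0 - δ) ≥ c := by
          have hge : a i0 - δ ≥ c / ((r i0:ℝ)+1) := by linarith [hδlt.le]
          calc ((r i0:ℝ)+1)*(a i0 - δ) ≥ ((r i0:ℝ)+1)*(c/((r i0:ℝ)+1)) :=
                mul_le_mul_of_nonneg_left hge (by positivity)
            _ = c := mul_div_cancel₀ _ (by positivity)
        linarith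
      · simp only [if_neg hji]
        have hbj : b j = a j := by simp [hbdef, Function.update_of_ne hji]
        rw [hbj]
        apply floor_le_of_lt_add_one
        have hcast : ((r j - 1 : ℕ) : ℝ) + 1 = (r j : ℝ) := by
          have := hr1 j
          push_cast [Nat.cast_sub this]
          ring
        rw [hcast, div_lt_iff₀ (hapos j)]
        calc c' < c := hc'
        _ = (r j : ℝ) * a j := (hr j).symm
    have hNf : Nf b c' ≤ ∑ j, (if j = i0 then r i0 else r j - 1) :=
      Finset.sum_le_sum fun j _ => hbound j
    have hsum2 : ∑ j, (if j = i0 then r i0 else r j - 1) = ∑ j, (r j - 1) + 1 := by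
      have heq2 : ∀ j ∈ Finset.univ,
          (if j = i0 then r i0 else r j - 1) = (r j - 1) + (if j = i0 then 1 else 0) := by
        intro j _
        rcases eq_or_ne j i0 with rfl | hji
        · rw [if_pos rfl, if_pos rfl]
          have := hr1 i0
          omega
        · simp [hji]
      rw [Finset.sum_congr rfl heq2, Finset.sum_add_distrib,
        Finset.sum_ite_eq' Finset.univ i0 (fun _ => 1)]
      simp
    omega
  exact ⟨r, hr1, hmono, fun i => hr i, by omega⟩
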